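/- For 0 < r < 1 and all real t, the second t-derivative of the Poisson kernel satisfies |P_{tt}(r,t)| ≤ ((4π²r² + 12r³)/(3r³)) (1-r)^{-3}. -/

import Mathlib

/-!
Writing `D = 1 - 2 r cos t + r² ≥ (1 - r)²`, two differentiations give
`P_tt = (1 - r²) (8 r² sin² t - 2 r cos t · D) / D³`, and the bracket is at most `8 r D` in
absolute value. Hence `|P_tt| ≤ 8 r (1 + r) / (1 - r)³`, and `8 r (1 + r) < 16 ≤ 12 / r + 4`
is below the stated constant `4 π² / (3 r) + 4` because `π² ≥ 9`.
-/

open Real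

noncomputable def polarPoissonKernel (r t : ℝ) : ℝ :=
  (1 - r ^ 2) / (1 - 2 * r * cos t + r ^ 2)

namespace polarPoissonKernel

variable {r : ℝ}

lemma denom_eq (r t : ℝ) : 1 - 2 * r * cos t + r ^ 2 = (r - cos t) ^ 2 + sin t ^ 2 := by
  linear_combination -sin_sq_add_cos_sq t

lemma denom_pos (hr : r ^ 2 ≠ 1) (t : ℝ) : 0 < 1 - 2 * r * cos t + r ^ 2 := by
  rw [denom_eq]
  by_contra! h
  have hsin : sin t = 0 := by nlinarith [sq_nonneg (r - cos t), sq_nonneg (sin t)]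
  have hcos : r = cos t := by nlinarith [sq_nonneg (r - cos t), sq_nonneg (sin t)]
  exact hr (by rw [hcos, ← sin_sq_add_cos_sq t, hsin]; ring)

lemma sq_one_sub_le_denom (hr : 0 ≤ r) (t : ℝ) : (1 - r) ^ 2 ≤ 1 - 2 * r * cos t + r ^ 2 := by
  nlinarith [cos_le_one t]

lemma hasDerivAt_denom (r t : ℝ) :
    HasDerivAt (fun s => 1 - 2 * r * cos s + r ^ 2) (2 * r * sin t) t := by
  simpa using (((hasDerivAt_cos t).const_mul (2 * r)).const_sub 1).add_const (r ^ 2)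

lemma deriv_eq (hr : r ^ 2 ≠ 1) :
    deriv (polarPoissonKernel r) =
      fun t => -((1 - r ^ 2) * (2 * r * sin t)) / (1 - 2 * r * cos t + r ^ 2) ^ 2 := by
  funext t
  exact ((hasDerivAt_const t (1 - r ^ 2)).fun_div (hasDerivAt_denom r t)
    (denom_pos hr t).ne').deriv.trans (by ring)

lemma deriv_deriv_eq (hr : r ^ 2 ≠ 1) (t : ℝ) :
    deriv (deriv (polarPoissonKernel r)) t =
      (1 - r ^ 2) * (8 * r ^ 2 * sin t ^ 2 - 2 * r * cos t * (1 - 2 * r * cos t + r ^ 2)) /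
        (1 - 2 * r * cos t + r ^ 2) ^ 3 := by
  have hD := (denom_pos hr t).ne'
  have hnum : HasDerivAt (fun s => -((1 - r ^ 2) * (2 * r * sin s)))
      (-((1 - r ^ 2) * (2 * r * cos t))) t :=
    (((hasDerivAt_sin t).const_mul (2 * r)).const_mul (1 - r ^ 2)).neg
  rw [deriv_eq hr, (hnum.fun_div ((hasDerivAt_denom r t).fun_pow 2) (pow_ne_zero 2 hD)).deriv]
  push_cast
  field_simp
  ring

lemma abs_numer_le {c s : ℝ} (hr : 0 ≤ r) (hcs : s ^ 2 + c ^ 2 = 1) :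
    |8 * r ^ 2 * s ^ 2 - 2 * r * c * (1 - 2 * r * c + r ^ 2)|
      ≤ 8 * r * (1 - 2 * r * c + r ^ 2) := by
  have hc : c ≤ 1 := by nlinarith
  have hc' : -1 ≤ c := by nlinarith
  rw [abs_le]
  constructor
  · have hD : 0 ≤ 1 - 2 * r * c + r ^ 2 := by nlinarith [sq_nonneg (r - c)]
    nlinarith [mul_nonneg (mul_nonneg hr (by linarith : (0:ℝ) ≤ 8 - 2 * c)) hD,
      mul_nonneg (sq_nonneg r) (sq_nonneg s)]
  · have hQ : 0 ≤ (8 + 2 * c) * (1 - r) ^ 2 + 4 * r * (1 - c) * (2 - c) := by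
      have : 0 ≤ 8 + 2 * c := by linarith
      have : 0 ≤ 1 - c := by linarith
      have : 0 ≤ 2 - c := by linarith
      positivity
    -- with `D = 1 - 2 r c + r²` and `s² = 1 - c²`, `8 r D - (8 r² s² - 2 r c D)` is `r` times
    -- the quantity in `hQ`
    nlinarith [mul_nonneg hr hQ]

lemma abs_deriv_deriv_le (hr0 : 0 ≤ r) (hr1 : r < 1) (t : ℝ) :
    |deriv (deriv (polarPoissonKernel r)) t| ≤ 8 * r * (1 + r) / (1 - r) ^ 3 := by
  have hr : r ^ 2 ≠ 1 := by nlinarith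
  have hD := denom_pos hr t
  have hD' := sq_one_sub_le_denom hr0 t
  have h1r : 0 < 1 - r := by linarith
  have h1r2 : 0 < 1 - r ^ 2 := by nlinarith
  rw [deriv_deriv_eq hr, abs_div, abs_mul, abs_of_pos h1r2, abs_of_pos (pow_pos hD 3)]
  set D := 1 - 2 * r * cos t + r ^ 2
  calc (1 - r ^ 2) * |8 * r ^ 2 * sin t ^ 2 - 2 * r * cos t * D| / D ^ 3
      ≤ (1 - r ^ 2) * (8 * r * D) / D ^ 3 := by
        gcongr
        exact abs_numer_le hr0 (sin_sq_add_cos_sq t)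
    _ = 8 * r * (1 - r ^ 2) / D ^ 2 := by field_simp
    _ ≤ 8 * r * (1 - r ^ 2) / ((1 - r) ^ 2) ^ 2 := by gcongr
    _ = 8 * r * (1 + r) / (1 - r) ^ 3 := by field_simp; ring

end polarPoissonKernel

theorem stmt_15 (r : ℝ) (hr0 : 0 < r) (hr1 : r < 1) (t : ℝ) :
    |deriv (deriv (fun s : ℝ =>
        (1 - r ^ 2) / (1 - 2 * r * Real.cos s + r ^ 2))) t|
      ≤ ((4 * Real.pi ^ 2 * r ^ 2 + 12 * r ^ 3) / (3 * r ^ 3)) / (1 - r) ^ 3 := by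
  refine (polarPoissonKernel.abs_deriv_deriv_le hr0.le hr1 t).trans ?_
  have hπ : 9 ≤ π ^ 2 := by nlinarith [pi_gt_three]
  gcongr
  rw [le_div_iff₀ (by positivity)]
  nlinarith [pow_pos hr0 2, pow_pos hr0 3, pow_pos hr0 4, pow_pos hr0 5]
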